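/- arXiv:0710.2281 — 5 statements merged into one kernel-verified Lean document; each statement's English description precedes it below -/
import Mathlib

section
/- For every β ∈ ℂ, the formal power series Φ_β(x) satisfies the differential equation x·Φ_β''(x) + (x+1)·Φ_β'(x) − β·Φ_β(x) = 0 in ℂ⟦x⟧, where ' denotes the formal derivative d/dx of power series. -/
/-!
Writing `Φ_β = ∑ aₙ xⁿ`, the coefficient of `xⁿ` in `x Φ'' + (x + 1) Φ' - β Φ` is
`n (n + 1) aₙ₊₁ + n aₙ + (n + 1) aₙ₊₁ - β aₙ = (n + 1)² aₙ₊₁ - (β - n) aₙ`, and this vanishes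
because `aₙ = binom(β, n) / n!` and `(n + 1) binom(β, n + 1) = (β - n) binom(β, n)`.
-/

/-- The generalized binomial coefficient `binom(β,n) = (1/n!) ∏_{j=0}^{n-1} (β - j)`. -/
noncomputable def genBinom {R : Type*} [CommRing R] [Algebra ℚ R] (β : R) (n : ℕ) : R :=
  (n.factorial : ℚ)⁻¹ • ∏ j ∈ Finset.range n, (β - (j : R))

/-- The hypergeometric series `Φ_β(x) = ∑_{n ≥ 0} binom(β,n) xⁿ / n!`. -/
noncomputable def Phi (β : ℂ) : PowerSeries ℂ :=
  PowerSeries.mk fun n => (n.factorial : ℂ)⁻¹ * genBinom β n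

/-- The formal derivative `d/dx` of a power series. -/
noncomputable def psDeriv (f : PowerSeries ℂ) : PowerSeries ℂ :=
  PowerSeries.mk fun n => ((n : ℂ) + 1) * PowerSeries.coeff (R := ℂ) (n + 1) f

open PowerSeries

theorem succ_mul_genBinom_succ {R : Type*} [CommRing R] [Algebra ℚ R] (β : R) (n : ℕ) :
    ((n : R) + 1) * genBinom β (n + 1) = (β - n) * genBinom β n := by
  have hfact : ((n : ℚ) + 1) * ((n + 1).factorial : ℚ)⁻¹ = (n.factorial : ℚ)⁻¹ := by
    rw [Nat.factorial_succ]; push_cast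
    field_simp
  have hcast : ((n : R) + 1) = algebraMap ℚ R ((n : ℚ) + 1) := by simp
  rw [genBinom, genBinom, Finset.prod_range_succ, Algebra.smul_def, Algebra.smul_def, hcast,
    ← mul_assoc, ← map_mul, hfact]
  ring

theorem coeff_psDeriv (f : PowerSeries ℂ) (n : ℕ) :
    coeff n (psDeriv f) = ((n : ℂ) + 1) * coeff (n + 1) f :=
  coeff_mk _ _

theorem coeff_X_mul_psDeriv (f : PowerSeries ℂ) (n : ℕ) :
    coeff n (X * psDeriv f) = n * coeff n f := by
  cases n with
  | zero => simp
  | succ n => simp [coeff_succ_X_mul, coeff_psDeriv]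

theorem coeff_Phi_succ (β : ℂ) (n : ℕ) :
    ((n : ℂ) + 1) ^ 2 * coeff (n + 1) (Phi β) = (β - n) * coeff n (Phi β) := by
  simp only [Phi, coeff_mk, Nat.factorial_succ, Nat.cast_mul, Nat.cast_succ, mul_inv]
  have hn : ((n : ℂ) + 1) ≠ 0 := n.cast_add_one_ne_zero
  rw [mul_left_comm (β - n), ← succ_mul_genBinom_succ]
  field_simp

/-- `Φ_β` satisfies the differential equation `x Φ'' + (x+1) Φ' - β Φ = 0`. -/
theorem phi_ode (β : ℂ) :
    PowerSeries.X * psDeriv (psDeriv (Phi β)) + (PowerSeries.X + 1) * psDeriv (Phi β)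
      - PowerSeries.C (R := ℂ) β * Phi β = 0 := by
  ext n
  simp only [map_sub, map_add, add_mul, one_mul, coeff_X_mul_psDeriv, coeff_psDeriv, coeff_C_mul,
    map_zero]
  linear_combination coeff_Phi_succ β n
end

section
/- Let T be the ℚ-linear derivation of the polynomial ring ℚ[y₁,y₂,y₃,…] determined by T(y_k) = (k+1)·y_{k+1} for all k ≥ 1, and let M_{y₁} denote the operator of multiplication by y₁. Then for every n ≥ 0 the elementary Schur polynomial satisfies n!·S_n(y₁,y₂,…) = (M_{y₁} + T)ⁿ(1); equivalently, the recursion (M_{y₁} + T)(S_{n−1}) = n·S_n holds for every n ≥ 1. -/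
/-!
Write `S_n = ∑ y^d / d!` over the exponent vectors `d` of weight `∑ k d_k = n`. Then
`∂S_n/∂y_k = S_{n-k}` for `1 ≤ k ≤ n`, and `T = ∑_k (k+1) y_{k+1} ∂/∂y_k`, so
`T S_n = ∑_{k ≥ 1} (k+1) y_{k+1} S_{n-k}`. Euler's identity for the weight grading gives
`(n+1) S_{n+1} = ∑_{k ≥ 1} k y_k S_{n+1-k}`, which is the same sum plus the term `y_1 S_n`.
-/

open MvPolynomial

/-- The elementary Schur polynomial `S_n(y₁,y₂,…) = ∑_{i₁+2i₂+⋯=n} ∏_k y_k^{i_k}/i_k!`,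
in the polynomial ring `ℚ[y₁,y₂,…] ⊆ MvPolynomial ℕ ℚ` with `y_k = X k` for `k ≥ 1`. -/
noncomputable def schur (n : ℕ) : MvPolynomial ℕ ℚ :=
  ∑ i : Fin n → Fin (n + 1),
    if (∑ k : Fin n, (k.1 + 1) * (i k).1) = n then
      ∏ k : Fin n, C (((i k).1.factorial : ℚ)⁻¹) * X (k.1 + 1) ^ ((i k).1)
    else 0

/-- The derivation `T` of `ℚ[y₁,y₂,…]` determined by `T(y_k) = (k+1) y_{k+1}`. -/
noncomputable def Tder : Derivation ℚ (MvPolynomial ℕ ℚ) (MvPolynomial ℕ ℚ) :=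
  MvPolynomial.mkDerivation ℚ fun k => ((k : MvPolynomial ℕ ℚ) + 1) * X (k + 1)

open Finset

namespace MvPolynomial

variable {σ R : Type*} [CommSemiring R]

theorem IsWeightedHomogeneous.sum_weight_X_mul_pderiv_of_vars_subset {w : σ → ℕ} {n : ℕ}
    {φ : MvPolynomial σ R} {s : Finset σ} (h : φ.IsWeightedHomogeneous w n)
    (hs : φ.vars ⊆ s) :
    ∑ i ∈ s, w i • (X i * pderiv i φ) = n • φ := by
  have hweight : ∀ d ∈ φ.support, ∑ i ∈ s, d i * w i = n := fun d hd => by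
    rw [← h (mem_support_iff.1 hd), Finsupp.weight_apply, Finsupp.sum_of_support_subset d
      (fun i hi => hs ((mem_vars_iff_mem_support i).2 ⟨d, hd, hi⟩)) _ (by simp)]
    simp
  calc ∑ i ∈ s, w i • (X i * pderiv i φ)
      = ∑ d ∈ φ.support, ∑ i ∈ s, w i • (X i * pderiv i (monomial d (coeff d φ))) := by
        conv_lhs => rw [φ.as_sum]
        simp only [map_sum, Finset.mul_sum, Finset.smul_sum]
        exact sum_comm
    _ = ∑ d ∈ φ.support, n • monomial d (coeff d φ) := by
        refine sum_congr rfl fun d hd => ?_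
        simp only [X_mul_pderiv_monomial, smul_smul, ← sum_smul, mul_comm (w _), hweight d hd]
    _ = n • φ := by rw [← Finset.smul_sum, ← φ.as_sum]

theorem IsWeightedHomogeneous.vars_subset_range {n : ℕ} {φ : MvPolynomial ℕ R}
    (h : φ.IsWeightedHomogeneous id n) : φ.vars ⊆ range (n + 1) := by
  intro i hi
  obtain ⟨d, hd, hid⟩ := (mem_vars_iff_mem_support i).1 hi
  rw [mem_range, Nat.lt_succ_iff, ← h (mem_support_iff.1 hd)]
  exact Finsupp.le_weight_of_ne_zero' id (Finsupp.mem_support_iff.1 hid)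

theorem derivation_eq_sum_mul_pderiv_of_vars_subset
    (D : Derivation R (MvPolynomial σ R) (MvPolynomial σ R)) {φ : MvPolynomial σ R}
    {s : Finset σ} (hs : φ.vars ⊆ s) : D φ = ∑ i ∈ s, D (X i) * pderiv i φ := by
  classical
  have hsum : ∀ ψ, (∑ i ∈ s, D (X i) • pderiv i) ψ = ∑ i ∈ s, D (X i) * pderiv i ψ := by
    intro ψ
    rw [← Derivation.coeFnAddMonoidHom_apply, map_sum, Finset.sum_apply]
    rfl
  rw [← hsum]
  refine derivation_eq_of_forall_mem_vars fun j hj => ?_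
  rw [hsum, sum_eq_single j (fun i _ hij => by simp [hij]) (fun hj' => absurd (hs hj) hj')]
  simp

end MvPolynomial

namespace Finsupp

variable {σ : Type*}

noncomputable def invFactorial (d : σ →₀ ℕ) : ℚ := d.prod fun _ e => (e.factorial : ℚ)⁻¹

theorem invFactorial_add_single (d : σ →₀ ℕ) (k : σ) :
    invFactorial (d + single k 1) * (d k + 1) = invFactorial d := by
  have hg : ∀ _ : σ, ((0 : ℕ).factorial : ℚ)⁻¹ = 1 := by simp
  rw [invFactorial, invFactorial, ← mul_prod_erase' _ k _ hg, ← mul_prod_erase' d k _ hg,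
    erase_add, erase_single, add_zero, add_apply, single_eq_same, Nat.factorial_succ]
  push_cast
  field_simp

end Finsupp

open Finsupp

noncomputable def schurExponent {n : ℕ} (i : Fin n → Fin (n + 1)) : ℕ →₀ ℕ :=
  embDomain (Fin.valEmbedding.trans (addRightEmbedding 1))
    (equivFunOnFinite.symm fun k => (i k : ℕ))

theorem schurExponent_succ {n : ℕ} (i : Fin n → Fin (n + 1)) (k : Fin n) :
    schurExponent i (k + 1) = i k :=
  embDomain_apply_self _ _ k

theorem schurExponent_injective (n : ℕ) : Function.Injective (schurExponent (n := n)) :=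
  fun i j h => funext fun k => Fin.ext <| by rw [← schurExponent_succ, h, schurExponent_succ]

theorem weight_schurExponent {n : ℕ} (i : Fin n → Fin (n + 1)) :
    weight id (schurExponent i) = ∑ k : Fin n, (k.1 + 1) * (i k).1 := by
  rw [weight_apply, schurExponent, sum_embDomain, sum_fintype _ _ (by simp)]
  simp [mul_comm]

theorem prod_C_mul_X_pow_eq_monomial_schurExponent {n : ℕ} (i : Fin n → Fin (n + 1)) :
    ∏ k : Fin n, C (((i k).1.factorial : ℚ)⁻¹) * X (k.1 + 1) ^ ((i k).1)
      = monomial (schurExponent i) (invFactorial (schurExponent i)) := by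
  rw [monomial_eq, invFactorial, schurExponent, prod_embDomain, prod_embDomain,
    prod_fintype _ _ (by simp), prod_fintype _ _ (by simp), map_prod, ← prod_mul_distrib]
  simp

theorem schurExponent_zero {n : ℕ} (i : Fin n → Fin (n + 1)) : schurExponent i 0 = 0 :=
  embDomain_of_notMem_range _ _ 0 (by simp)

theorem exists_schurExponent_eq {n : ℕ} {d : ℕ →₀ ℕ} (h0 : d 0 = 0) (hd : weight id d = n) :
    ∃ i : Fin n → Fin (n + 1), schurExponent i = d := by
  refine ⟨fun k => ⟨d (k + 1), Nat.lt_succ_of_le (hd ▸ le_weight id (by simp) d)⟩, ?_⟩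
  ext m
  rcases m with _ | m
  · rw [h0, schurExponent_zero]
  by_cases hm : m < n
  · exact schurExponent_succ _ ⟨m, hm⟩
  · have : d (m + 1) = 0 := by
      by_contra hne
      have : m + 1 ≤ n := hd ▸ le_weight_of_ne_zero' id hne
      omega
    rw [this]
    exact embDomain_of_notMem_range _ _ _ (by simpa using fun k : Fin n => by omega)

theorem coeff_schur (n : ℕ) (d : ℕ →₀ ℕ) :
    coeff d (schur n) = if d 0 = 0 ∧ weight id d = n then invFactorial d else 0 := by
  simp only [schur, coeff_sum, ← weight_schurExponent,
    prod_C_mul_X_pow_eq_monomial_schurExponent, apply_ite (coeff d), coeff_monomial, coeff_zero]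
  by_cases hd : ∃ i₀ : Fin n → Fin (n + 1), schurExponent i₀ = d
  · obtain ⟨i₀, rfl⟩ := hd
    rw [Fintype.sum_eq_single i₀ fun i hi => by simp [(schurExponent_injective n).ne hi]]
    simp [schurExponent_zero]
  · simp only [not_exists] at hd
    rw [if_neg fun ⟨h0, hw⟩ => (exists_schurExponent_eq h0 hw).elim hd]
    simp [hd]

theorem isWeightedHomogeneous_schur (n : ℕ) : (schur n).IsWeightedHomogeneous id n := by
  intro d hd
  rw [coeff_schur] at hd
  by_contra h
  exact hd (if_neg fun h' => h h'.2)

theorem pderiv_zero_schur (n : ℕ) : pderiv 0 (schur n) = 0 := by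
  ext d
  simp [coeff_pderiv, coeff_schur]

theorem pderiv_schur {n k : ℕ} (hk : 0 < k) (hkn : k ≤ n) :
    pderiv k (schur n) = schur (n - k) := by
  ext d
  have hw : weight id (d + single k 1) = weight id d + k := by simp [weight_single]
  rw [coeff_pderiv, coeff_schur, coeff_schur, hw, Finsupp.add_apply, single_apply, if_neg hk.ne',
    add_zero]
  by_cases h : d 0 = 0 ∧ weight id d = n - k
  · rw [if_pos ⟨h.1, by omega⟩, if_pos h]
    exact_mod_cast invFactorial_add_single d k
  · rw [if_neg fun h' => h ⟨h'.1, by omega⟩, if_neg h, zero_mul]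

theorem Tder_schur (n : ℕ) :
    Tder (schur n)
      = ∑ k ∈ range n, ((k : MvPolynomial ℕ ℚ) + 2) * X (k + 2) * schur (n - (k + 1)) := by
  rw [derivation_eq_sum_mul_pderiv_of_vars_subset Tder
    (isWeightedHomogeneous_schur n).vars_subset_range,
    sum_range_succ', pderiv_zero_schur, mul_zero, add_zero]
  refine sum_congr rfl fun k hk => ?_
  rw [Tder, mkDerivation_X, pderiv_schur k.succ_pos (mem_range.1 hk)]
  push_cast
  ring

theorem succ_mul_schur_succ (n : ℕ) :
    ((n + 1 : ℕ) : MvPolynomial ℕ ℚ) * schur (n + 1)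
      = X 1 * schur n
        + ∑ k ∈ range n, ((k : MvPolynomial ℕ ℚ) + 2) * X (k + 2) * schur (n - (k + 1)) := by
  have hS := isWeightedHomogeneous_schur (n + 1)
  rw [← nsmul_eq_mul, ← hS.sum_weight_X_mul_pderiv_of_vars_subset hS.vars_subset_range,
    sum_range_succ', sum_range_succ', pderiv_zero_schur, mul_zero, smul_zero, add_zero, zero_add,
    pderiv_schur one_pos (by omega), id, one_smul, Nat.add_sub_cancel, add_comm]
  refine congrArg _ (sum_congr rfl fun k hk => ?_)
  rw [pderiv_schur (by omega) (by have := mem_range.1 hk; omega), id, nsmul_eq_mul]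
  push_cast
  ring

theorem schur_recursion (n : ℕ) :
    X 1 * schur n + Tder (schur n) = ((n + 1 : ℕ) : MvPolynomial ℕ ℚ) * schur (n + 1) := by
  rw [Tder_schur, succ_mul_schur_succ]

theorem schur_zero : schur 0 = 1 := by simp [schur]

/-- `n! S_n = (M_{y₁} + T)ⁿ (1)`; equivalently `(M_{y₁} + T)(S_{n-1}) = n S_n` for `n ≥ 1`. -/
theorem stmt7 :
    (∀ n : ℕ, (n.factorial : MvPolynomial ℕ ℚ) * schur n
        = (fun q => X 1 * q + Tder q)^[n] 1)
    ∧ ∀ n : ℕ, 1 ≤ n →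
        X 1 * schur (n - 1) + Tder (schur (n - 1)) = (n : MvPolynomial ℕ ℚ) * schur n := by
  refine ⟨fun n => ?_, fun n hn => ?_⟩
  · induction n with
    | zero => simp [schur_zero]
    | succ n ih =>
      rw [Function.iterate_succ_apply', ← ih, Tder.leibniz, Derivation.map_natCast, smul_zero,
        add_zero, smul_eq_mul, ← mul_left_comm, ← mul_add, schur_recursion, Nat.factorial_succ,
        Nat.cast_mul]
      ring
  · obtain ⟨m, rfl⟩ := Nat.exists_eq_add_of_le' hn
    simpa using schur_recursion m
end

section
/- Let β ∈ ℂ. Let B = A[λ] be the polynomial ring in one further variable λ over A, extend T to a derivation of B by setting T(λ) = 0, and let L := M_λ + T + β·M_{h₀} be the ℂ-linear operator on B, where M_λ and M_{h₀} denote multiplication by λ and by h₀ respectively. For d ≥ 0 set P_d := L^d(1). Let ι : A → A be the ℂ-algebra automorphism with ι(h_k) = −h_k for all k ≥ 0, and define the ℂ-linear map σ : B → B by σ(a·λⁿ) := (−M_λ − T)ⁿ(ι(a)) for a ∈ A and n ≥ 0 (this is the substitution λ ↦ −λ−T, h_k ↦ −h_k, well defined since B is a free A-module with basis {λⁿ}).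 Then σ(P_d) = (−1)^d·P_d for every d ≥ 0. -/
/- `A = ℂ[h₀,h₁,h₂,…] = MvPolynomial ℕ ℂ` with the derivation `T`, `T(h_k) = h_{k+1}`;
`B = A[λ] = Polynomial A`. -/

/-- The derivation `T` of `A = ℂ[h₀,h₁,…]` with `T(h_k) = h_{k+1}`. -/
noncomputable def TA : Derivation ℂ (MvPolynomial ℕ ℂ) (MvPolynomial ℕ ℂ) :=
  MvPolynomial.mkDerivation ℂ fun k => MvPolynomial.X (k + 1)

/-- The extension of `T` to `B = A[λ]` with `T(λ) = 0` (acting on coefficients). -/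
noncomputable def TB (p : Polynomial (MvPolynomial ℕ ℂ)) : Polynomial (MvPolynomial ℕ ℂ) :=
  p.sum fun n a => Polynomial.C (TA a) * Polynomial.X ^ n

/-- The operator `L = M_λ + T + β·M_{h₀}` on `B`. -/
noncomputable def Lop (β : ℂ) (p : Polynomial (MvPolynomial ℕ ℂ)) :
    Polynomial (MvPolynomial ℕ ℂ) :=
  Polynomial.X * p + TB p + Polynomial.C (MvPolynomial.C β * MvPolynomial.X 0) * p

/-- The `ℂ`-algebra automorphism `ι` of `A` with `ι(h_k) = -h_k`. -/
noncomputable def iotaA : MvPolynomial ℕ ℂ →ₐ[ℂ] MvPolynomial ℕ ℂ :=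
  MvPolynomial.aeval fun k => -MvPolynomial.X k

/-- The `ℂ`-linear map `σ : B → B` with `σ(a·λⁿ) = (-M_λ - T)ⁿ (ι a)`
(the substitution `λ ↦ -λ-T`, `h_k ↦ -h_k`). -/
noncomputable def sigmaB (p : Polynomial (MvPolynomial ℕ ℂ)) :
    Polynomial (MvPolynomial ℕ ℂ) :=
  p.sum fun n a => (fun q => -(Polynomial.X * q) - TB q)^[n] (Polynomial.C (iotaA a))

/-! Conjugate `L` by `σ`. The substitution `σ` intertwines `M_λ` with `-(M_λ + T)`, commutes
with `T` and with multiplication by constants, and turns `M_{h₀}` into `-E`, where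
`E(Σ aₙ λⁿ) = Σ aₙ (λ + T)ⁿ h₀`; hence `σ ∘ L = -(M_λ + β E) ∘ σ`. Since `E` is `A`-linear
and commutes with `M_λ + T`, the operator `N = T + β M_{h₀} - β E` commutes with `L`, and
`N 1 = 0`. So `N P_d = 0`, i.e. `L P_d = (M_λ + β E) P_d`, and therefore
`σ(P_{d+1}) = -(M_λ + β E)(±P_d) = ∓P_{d+1}`. -/

open Polynomial

local notation "𝔸" => MvPolynomial ℕ ℂ
local notation "𝔹" => Polynomial (MvPolynomial ℕ ℂ)

lemma TA_X (k : ℕ) : TA (MvPolynomial.X k) = MvPolynomial.X (k + 1) :=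
  MvPolynomial.mkDerivation_X ℂ _ k

lemma TA_C (c : ℂ) : TA (MvPolynomial.C c) = 0 :=
  TA.map_algebraMap c

lemma TA_mul (a b : 𝔸) : TA (a * b) = a * TA b + b * TA a := by
  rw [Derivation.leibniz, smul_eq_mul, smul_eq_mul]

lemma iotaA_X (k : ℕ) : iotaA (MvPolynomial.X k) = -MvPolynomial.X k :=
  MvPolynomial.aeval_X _ k

lemma iotaA_C (c : ℂ) : iotaA (MvPolynomial.C c) = MvPolynomial.C c :=
  iotaA.commutes c

lemma iotaA_TA (a : 𝔸) : iotaA (TA a) = TA (iotaA a) := by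
  induction a using MvPolynomial.induction_on with
  | C c => rw [TA_C, map_zero, iotaA_C, TA_C]
  | add p q hp hq => rw [map_add, map_add, hp, hq, map_add, map_add]
  | mul_X p k hp =>
    rw [TA_mul, map_mul, TA_mul, map_add, map_mul, map_mul, hp, TA_X, iotaA_X, iotaA_X, map_neg,
      TA_X]

lemma TB_monomial (n : ℕ) (a : 𝔸) : TB (monomial n a) = monomial n (TA a) := by
  rw [TB, sum_monomial_index _ _ (by simp), C_mul_X_pow_eq_monomial]

lemma TB_C (a : 𝔸) : TB (C a) = C (TA a) := by
  simp only [← monomial_zero_left, TB_monomial]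

lemma TB_add (p q : 𝔹) : TB (p + q) = TB p + TB q :=
  sum_add_index _ _ _ (by simp) (by simp [add_mul])

lemma TB_zero : TB 0 = 0 :=
  (AddMonoidHom.mk' TB TB_add).map_zero

lemma TB_neg (p : 𝔹) : TB (-p) = -TB p :=
  (AddMonoidHom.mk' TB TB_add).map_neg p

lemma TB_sub (p q : 𝔹) : TB (p - q) = TB p - TB q :=
  (AddMonoidHom.mk' TB TB_add).map_sub p q

lemma TB_one : TB 1 = 0 := by
  rw [← C_1, TB_C, Derivation.map_one_eq_zero, C_0]

lemma TB_X_mul (p : 𝔹) : TB (X * p) = X * TB p := by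
  induction p using Polynomial.induction_on' with
  | add p q hp hq => rw [mul_add, TB_add, hp, hq, TB_add, mul_add]
  | monomial n a => rw [X_mul_monomial, TB_monomial, TB_monomial, X_mul_monomial]

lemma TB_C_mul (b : 𝔸) (p : 𝔹) : TB (C b * p) = C (TA b) * p + C b * TB p := by
  induction p using Polynomial.induction_on' with
  | add p q hp hq => rw [mul_add, TB_add, hp, hq, TB_add]; ring
  | monomial n a =>
    rw [C_mul_monomial, TB_monomial, TB_monomial, TA_mul, C_mul_monomial, C_mul_monomial,
      ← (monomial n).map_add]
    ring_nf

noncomputable def Rop (q : 𝔹) : 𝔹 := X * q + TB q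

noncomputable def Sop (q : 𝔹) : 𝔹 := -(X * q) - TB q

noncomputable def Eop (p : 𝔹) : 𝔹 := p.sum fun n a => C a * Rop^[n] (C (MvPolynomial.X 0))

lemma Rop_add (p q : 𝔹) : Rop (p + q) = Rop p + Rop q := by
  simp only [Rop, TB_add]; ring

lemma Rop_monomial (n : ℕ) (a : 𝔸) :
    Rop (monomial n a) = monomial (n + 1) a + monomial n (TA a) := by
  rw [Rop, X_mul_monomial, TB_monomial]

lemma Sop_eq_neg_Rop (q : 𝔹) : Sop q = -Rop q := by
  rw [Sop, Rop, neg_add']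

lemma Sop_add (p q : 𝔹) : Sop (p + q) = Sop p + Sop q := by
  simp only [Sop_eq_neg_Rop, Rop_add, neg_add]

lemma Sop_neg (p : 𝔹) : Sop (-p) = -Sop p := by
  simp only [Sop, TB_neg]; ring

lemma Eop_monomial (n : ℕ) (a : 𝔸) :
    Eop (monomial n a) = C a * Rop^[n] (C (MvPolynomial.X 0)) :=
  sum_monomial_index _ _ (by simp)

lemma Eop_C (b : 𝔸) : Eop (C b) = C b * C (MvPolynomial.X 0) :=
  Eop_monomial 0 b

lemma Eop_one : Eop 1 = C (MvPolynomial.X 0) := by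
  rw [← C_1, Eop_C, C_1, one_mul]

lemma Eop_add (p q : 𝔹) : Eop (p + q) = Eop p + Eop q :=
  sum_add_index _ _ _ (by simp) (by simp [add_mul])

lemma Eop_neg (p : 𝔹) : Eop (-p) = -Eop p :=
  (AddMonoidHom.mk' Eop Eop_add).map_neg p

lemma Eop_C_mul (c : 𝔸) (p : 𝔹) : Eop (C c * p) = C c * Eop p := by
  induction p using Polynomial.induction_on' with
  | add p q hp hq => rw [mul_add, Eop_add, hp, hq, Eop_add, mul_add]
  | monomial n a => rw [C_mul_monomial, Eop_monomial, Eop_monomial, C_mul, mul_assoc]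

lemma Eop_Rop (p : 𝔹) : Eop (Rop p) = Rop (Eop p) := by
  induction p using Polynomial.induction_on' with
  | add p q hp hq => rw [Rop_add, Eop_add, hp, hq, Eop_add, Rop_add]
  | monomial n a =>
    rw [Rop_monomial, Eop_add, Eop_monomial, Eop_monomial, Eop_monomial,
      Function.iterate_succ_apply', Rop, Rop, TB_C_mul]
    ring

lemma Eop_Sop (p : 𝔹) : Eop (Sop p) = Sop (Eop p) := by
  rw [Sop_eq_neg_Rop, Sop_eq_neg_Rop, Eop_neg, Eop_Rop]

lemma TB_Sop (p : 𝔹) : TB (Sop p) = Sop (TB p) := by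
  simp only [Sop, sub_eq_add_neg, TB_add, TB_neg, TB_X_mul]

lemma C_mul_Sop {c : 𝔸} (hc : TA c = 0) (p : 𝔹) : C c * Sop p = Sop (C c * p) := by
  rw [Sop, Sop, TB_C_mul, hc, C_0, zero_mul, zero_add]; ring

lemma Sop_iterate_zero (n : ℕ) : Sop^[n] 0 = 0 :=
  Function.iterate_fixed (AddMonoidHom.mk' Sop Sop_add).map_zero n

lemma sigmaB_eq_sum (p : 𝔹) : sigmaB p = p.sum fun n a => Sop^[n] (C (iotaA a)) :=
  rfl

lemma sigmaB_monomial (n : ℕ) (a : 𝔸) : sigmaB (monomial n a) = Sop^[n] (C (iotaA a)) := by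
  rw [sigmaB_eq_sum, sum_monomial_index _ _ (by rw [map_zero, C_0, Sop_iterate_zero])]

lemma sigmaB_add (p q : 𝔹) : sigmaB (p + q) = sigmaB p + sigmaB q := by
  simp only [sigmaB_eq_sum]
  exact sum_add_index _ _ _ (fun n => by rw [map_zero, C_0, Sop_iterate_zero])
    (fun n a b => by rw [map_add, C_add, Function.Semiconj₂.iterate Sop_add])

lemma sigmaB_one : sigmaB 1 = 1 := by
  simpa using sigmaB_monomial 0 1

lemma sigmaB_X_mul (p : 𝔹) : sigmaB (X * p) = Sop (sigmaB p) := by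
  induction p using Polynomial.induction_on' with
  | add p q hp hq => rw [mul_add, sigmaB_add, hp, hq, sigmaB_add, Sop_add]
  | monomial n a =>
    rw [X_mul_monomial, sigmaB_monomial, sigmaB_monomial, Function.iterate_succ_apply']

lemma sigmaB_TB (p : 𝔹) : sigmaB (TB p) = TB (sigmaB p) := by
  induction p using Polynomial.induction_on' with
  | add p q hp hq => rw [TB_add, sigmaB_add, hp, hq, sigmaB_add, TB_add]
  | monomial n a =>
    rw [TB_monomial, sigmaB_monomial, sigmaB_monomial, iotaA_TA, ← TB_C,
      Function.Commute.iterate_right TB_Sop n]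

lemma sigmaB_C_h0_mul (p : 𝔹) : sigmaB (C (MvPolynomial.X 0) * p) = -Eop (sigmaB p) := by
  induction p using Polynomial.induction_on' with
  | add p q hp hq => rw [mul_add, sigmaB_add, hp, hq, sigmaB_add, Eop_add, neg_add]
  | monomial n a =>
    rw [C_mul_monomial, sigmaB_monomial, sigmaB_monomial, map_mul, iotaA_X, neg_mul, C_neg,
      Function.Commute.iterate_left Sop_neg n, Function.Commute.iterate_right Eop_Sop n, Eop_C,
      C_mul, mul_comm]

lemma sigmaB_C_C_mul (c : ℂ) (p : 𝔹) :
    sigmaB (C (MvPolynomial.C c) * p) = C (MvPolynomial.C c) * sigmaB p := by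
  induction p using Polynomial.induction_on' with
  | add p q hp hq => rw [mul_add, sigmaB_add, hp, hq, sigmaB_add, mul_add]
  | monomial n a =>
    rw [C_mul_monomial, sigmaB_monomial, sigmaB_monomial, map_mul, iotaA_C, C_mul,
      Function.Commute.iterate_right (C_mul_Sop (TA_C c)) n]

lemma sigmaB_Lop (β : ℂ) (p : 𝔹) :
    sigmaB (Lop β p) = -(X * sigmaB p + C (MvPolynomial.C β) * Eop (sigmaB p)) := by
  rw [Lop, C_mul, mul_assoc, sigmaB_add, sigmaB_add, sigmaB_X_mul, sigmaB_TB, sigmaB_C_C_mul,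
    sigmaB_C_h0_mul, Sop]
  ring

lemma Lop_zero (β : ℂ) : Lop β 0 = 0 := by
  rw [Lop, TB_zero]; ring

noncomputable def Nop (β : ℂ) (p : 𝔹) : 𝔹 :=
  TB p + C (MvPolynomial.C β * MvPolynomial.X 0) * p - C (MvPolynomial.C β) * Eop p

lemma Nop_one (β : ℂ) : Nop β 1 = 0 := by
  rw [Nop, TB_one, Eop_one, C_mul]; ring

lemma Nop_commute_Lop (β : ℂ) : Function.Commute (Nop β) (Lop β) := by
  intro p
  have hE : Eop (Lop β p) = Rop (Eop p) + C (MvPolynomial.C β * MvPolynomial.X 0) * Eop p := by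
    rw [← Eop_C_mul, ← Eop_Rop, ← Eop_add]; rfl
  rw [Nop, Nop, hE, Lop, Lop, Rop]
  simp only [TB_sub, TB_add, TB_X_mul, TB_C_mul, TA_mul, TA_C, TA_X, C_0]
  ring

lemma Nop_iterate_Lop_one (β : ℂ) (d : ℕ) : Nop β ((Lop β)^[d] 1) = 0 := by
  rw [(Nop_commute_Lop β).iterate_right d 1, Nop_one, Function.iterate_fixed (Lop_zero β)]

/-- For `P_d = L^d(1)` one has `σ(P_d) = (-1)^d · P_d`. -/
theorem stmt9 (β : ℂ) (d : ℕ) :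
    sigmaB ((Lop β)^[d] 1) = (-1 : Polynomial (MvPolynomial ℕ ℂ)) ^ d * (Lop β)^[d] 1 := by
  induction d with
  | zero => rw [Function.iterate_zero_apply, sigmaB_one, pow_zero, one_mul]
  | succ d ih =>
    have hN := Nop_iterate_Lop_one β d
    rw [Nop] at hN
    have hsign : (-1 : 𝔹) ^ d = C ((-1) ^ d) := by simp
    rw [Function.iterate_succ_apply', sigmaB_Lop, ih, hsign, Eop_C_mul, Lop, pow_succ, hsign]
    linear_combination C ((-1 : 𝔸) ^ d) * hN
end

section
/- For every β ∈ ℂ, the identity exp(β·∑_{k≥1} (z^k/k!)·h_{k−1}) = ∑_{n≥0} (zⁿ/n!)·(T + β·M_h)ⁿ(1) holds in the ring A⟦z⟧ of formal power series in z with coefficients in A, where M_h denotes the operator of multiplication by h = h₀ in A, (T + β·M_h)ⁿ(1) ∈ A is the n-fold application of the operator T + β·M_h to the constant 1, and exp of a power series with zero constant term is defined by its exponential series. (The exponent on the left equals β·∫₀^z e^{xT}h dx, and the right-hand side is e^{z(T+βh)}·1.) -/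
/-- The exponential `exp f = ∑_{m ≥ 0} fᵐ/m!` of a formal power series `f` with zero constant
term; since `coeff n (fᵐ) = 0` for `m > n` when `f` has zero constant term, the `n`-th
coefficient of `exp f` is the finite sum `∑_{m=0}^{n} (1/m!) coeff n (fᵐ)`. -/
noncomputable def expPS {R : Type*} [CommRing R] [Algebra ℚ R] (f : PowerSeries R) :
    PowerSeries R :=
  PowerSeries.mk fun n =>
    ∑ m ∈ Finset.range (n + 1), (m.factorial : ℚ)⁻¹ • PowerSeries.coeff n (f ^ m)

open PowerSeries Finset Nat

section Exponential

variable {R : Type*} [CommRing R] [Algebra ℚ R]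

def expTrunc (N : ℕ) (a : R) : R :=
  ∑ m ∈ range N, (m ! : ℚ)⁻¹ • a ^ m

theorem Derivation.map_expTrunc_succ {k : Type*} [CommSemiring k] [Algebra k R]
    (d : Derivation k R R) (a : R) (N : ℕ) :
    d (expTrunc (N + 1) a) = d a * expTrunc N a := by
  rw [expTrunc, expTrunc, sum_range_succ', map_add, map_sum, mul_sum]
  simp only [pow_zero, smul_eq_mul, map_rat_smul, Derivation.map_one_eq_zero, smul_zero,
    add_zero, Derivation.leibniz_pow, add_tsub_cancel_right]
  refine sum_congr rfl fun m _ => ?_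
  rw [factorial_succ, ← Nat.cast_smul_eq_nsmul ℚ, smul_smul, mul_smul_comm,
    mul_comm (d a)]
  congr 1
  push_cast
  field_simp

theorem X_pow_dvd_expPS_sub_expTrunc {f : R⟦X⟧} (hf : constantCoeff f = 0) (N : ℕ) :
    (X : R⟦X⟧) ^ N ∣ expPS f - expTrunc N f := by
  have hpow : ∀ {n m : ℕ}, n < m → coeff n (f ^ m) = 0 := fun {n m} h =>
    X_pow_dvd_iff.mp (pow_dvd_pow_of_dvd (X_dvd_iff.mpr hf) m) n h
  refine X_pow_dvd_iff.mpr fun n hn => ?_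
  rw [map_sub, sub_eq_zero, expPS, coeff_mk, expTrunc, map_sum]
  simp only [coeff_smul]
  refine sum_subset (range_subset_range.mpr (by omega)) fun m _ hm => ?_
  rw [hpow (by simpa using hm), smul_zero]

theorem Derivation.map_expPS {k : Type*} [CommSemiring k] [Algebra k R]
    (δ : Derivation k R⟦X⟧ R⟦X⟧) (hδ : ∀ n g, X ^ (n + 1) ∣ g → X ^ n ∣ δ g)
    {f : R⟦X⟧} (hf : constantCoeff f = 0) :
    δ (expPS f) = δ f * expPS f := by
  ext n
  suffices X ^ (n + 1) ∣ δ (expPS f) - δ f * expPS f by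
    simpa [sub_eq_zero] using X_pow_dvd_iff.mp this n (by omega)
  have key : δ (expPS f) - δ f * expPS f =
      δ (expPS f - expTrunc (n + 2) f) - δ f * (expPS f - expTrunc (n + 1) f) := by
    rw [map_sub, δ.map_expTrunc_succ]
    ring
  rw [key]
  exact dvd_sub (hδ _ _ (X_pow_dvd_expPS_sub_expTrunc hf _))
    (dvd_mul_of_dvd_right (X_pow_dvd_expPS_sub_expTrunc hf _) _)

theorem coeff_zero_expPS (f : R⟦X⟧) : coeff 0 (expPS f) = 1 := by
  simp [expPS]

end Exponential

namespace Derivation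

variable {k B : Type*} [CommSemiring k] [CommRing B] [Algebra k B]

noncomputable def mapPowerSeries (d : Derivation k B B) : Derivation k B⟦X⟧ B⟦X⟧ :=
  Derivation.mk'
    { toFun := fun g => PowerSeries.mk fun n => d (coeff n g)
      map_add' := fun a b => by ext n; simp
      map_smul' := fun c a => by ext n; simp }
    fun a b => by
      rw [smul_eq_mul, smul_eq_mul, mul_comm b]
      ext n
      simp only [LinearMap.coe_mk, AddHom.coe_mk, coeff_mk, coeff_mul, map_sum, leibniz,
        smul_eq_mul, map_add, ← sum_add_distrib]
      exact sum_congr rfl fun p _ => by ring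

@[simp]
theorem coeff_mapPowerSeries (d : Derivation k B B) (g : B⟦X⟧) (n : ℕ) :
    coeff n (d.mapPowerSeries g) = d (coeff n g) := by
  simp [mapPowerSeries]

end Derivation

theorem eq_inv_factorial_smul_iterate {K M : Type*} [Field K] [CharZero K] [AddCommGroup M]
    [Module K M] (L : M →ₗ[K] M) (e : ℕ → M)
    (hsucc : ∀ n : ℕ, ((n : K) + 1) • e (n + 1) = L (e n)) (n : ℕ) :
    e n = (n ! : K)⁻¹ • L^[n] (e 0) := by
  induction n with
  | zero => simp
  | succ n ih =>
    have hn : (n : K) + 1 ≠ 0 := by exact_mod_cast succ_ne_zero n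
    rw [← inv_smul_smul₀ hn (e (n + 1)), hsucc, ih, map_smul, smul_smul,
      Function.iterate_succ_apply', factorial_succ]
    push_cast
    rw [mul_inv]

local notation "A" => MvPolynomial ℕ ℂ

theorem TA_C_mul_X (c : ℂ) (k : ℕ) :
    TA (MvPolynomial.C c * MvPolynomial.X k) = MvPolynomial.C c * MvPolynomial.X (k + 1) := by
  rw [MvPolynomial.C_mul', Derivation.map_smul, TA, MvPolynomial.mkDerivation_X,
    MvPolynomial.C_mul']

noncomputable def derivSubTA : Derivation ℂ A⟦X⟧ A⟦X⟧ :=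
  (derivative A).restrictScalars ℂ - TA.mapPowerSeries

theorem coeff_derivSubTA (g : A⟦X⟧) (n : ℕ) :
    coeff n (derivSubTA g) = coeff (n + 1) g * (n + 1) - TA (coeff n g) := by
  simp [derivSubTA, coeff_derivative]

theorem X_pow_dvd_derivSubTA {n : ℕ} {g : A⟦X⟧} (hg : X ^ (n + 1) ∣ g) :
    X ^ n ∣ derivSubTA g := by
  rw [X_pow_dvd_iff] at hg ⊢
  intro m hm
  rw [coeff_derivSubTA, hg m (by omega), hg (m + 1) (by omega)]
  simp

/-- `β ∫₀ᶻ e^{xT} h dx = β ∑_{k ≥ 1} (zᵏ/k!) h_{k-1}`. -/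
noncomputable def flowIntegral (β : ℂ) : A⟦X⟧ :=
  PowerSeries.mk fun k => if k = 0 then 0
    else MvPolynomial.C (β * (k ! : ℂ)⁻¹) * MvPolynomial.X (k - 1)

theorem constantCoeff_flowIntegral (β : ℂ) : constantCoeff (flowIntegral β) = 0 := by
  simp [flowIntegral, ← coeff_zero_eq_constantCoeff_apply]

theorem derivSubTA_flowIntegral (β : ℂ) :
    derivSubTA (flowIntegral β) = PowerSeries.C (MvPolynomial.C β * MvPolynomial.X 0) := by
  ext n : 1
  cases n with
  | zero => simp [flowIntegral, coeff_derivSubTA]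
  | succ n =>
    simp only [flowIntegral, coeff_derivSubTA, coeff_mk, coeff_C, succ_ne_zero, if_false,
      add_tsub_cancel_right, TA_C_mul_X]
    rw [sub_eq_zero, mul_comm, ← map_natCast MvPolynomial.C, ← map_one MvPolynomial.C,
      ← map_add, ← mul_assoc, ← MvPolynomial.C_mul, factorial_succ (n + 1)]
    have hn : (n : ℂ) + 1 + 1 ≠ 0 := by exact_mod_cast succ_ne_zero (n + 1)
    congr 2
    push_cast
    field_simp

/-- `exp (β ∑_{k ≥ 1} (zᵏ/k!) h_{k-1}) = ∑_{n ≥ 0} (zⁿ/n!) (T + β M_h)ⁿ(1)` in `A⟦z⟧`,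
i.e. `exp (β ∫₀ᶻ e^{xT} h dx) = e^{z(T + βh)} 1`. -/
theorem stmt10 (β : ℂ) :
    expPS (PowerSeries.mk fun k =>
        if k = 0 then 0
        else MvPolynomial.C (β * ((k.factorial : ℂ))⁻¹) * MvPolynomial.X (k - 1))
      = PowerSeries.mk fun n => MvPolynomial.C ((n.factorial : ℂ)⁻¹) *
          (fun a => TA a + MvPolynomial.C β * MvPolynomial.X 0 * a)^[n] 1 := by
  change expPS (flowIntegral β) = _
  set E := expPS (flowIntegral β)
  let L : A →ₗ[ℂ] A :=
    TA.toLinearMap + LinearMap.mulLeft ℂ (MvPolynomial.C β * MvPolynomial.X 0)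
  have hL : ⇑L = fun a => TA a + MvPolynomial.C β * MvPolynomial.X 0 * a := by
    funext a
    simp [L, mul_assoc]
  have hE : derivSubTA E = PowerSeries.C (MvPolynomial.C β * MvPolynomial.X 0) * E := by
    rw [derivSubTA.map_expPS (fun _ _ => X_pow_dvd_derivSubTA) (constantCoeff_flowIntegral β),
      derivSubTA_flowIntegral]
  have hrec (n : ℕ) : ((n : ℂ) + 1) • coeff (n + 1) E = L (coeff n E) := by
    have hn := congr_arg (coeff n) hE
    rw [coeff_derivSubTA, coeff_C_mul, sub_eq_iff_eq_add'] at hn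
    rw [← Nat.cast_succ, Nat.cast_smul_eq_nsmul, nsmul_eq_mul, mul_comm, Nat.cast_succ, hn]
    simp [L, mul_assoc]
  ext n : 1
  have hcoeff := eq_inv_factorial_smul_iterate L (fun n => coeff n E) hrec n
  rw [coeff_zero_expPS, hL] at hcoeff
  rw [coeff_mk, MvPolynomial.C_mul', hcoeff]
end

section
/- Let d ≥ 2 be an integer, let ε ∈ {0,1}, and let β ∈ ℂ with β ≠ 0. Then the system of equations binom(β, k+1)·(−1)^{k+1} = (−1)^ε·binom(β, d−k)·(−1)^{d−k} for all k = 0, 1, …, d−1 holds if and only if either (a) ε = 0 and β = −1, or (b) ε ≡ d+1 (mod 2) and β = d+1. -/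
theorem mul_neg_one_pow_eq_mul_neg_one_pow_iff {R : Type*} [CommRing R] {x y : R} {a b : ℕ} :
    x * (-1) ^ a = y * (-1) ^ b ↔ x = (-1) ^ (a + b) * y := by
  have hsq : (-1 : R) ^ a * (-1) ^ a = 1 := by rw [← mul_pow]; simp
  rw [pow_add]
  constructor <;> intro h
  · linear_combination (-1 : R) ^ a * h - x * hsq
  · linear_combination (-1 : R) ^ a * h + (-1 : R) ^ b * y * hsq

namespace Ring

variable {R : Type*} [CommRing R] [BinomialRing R]

theorem choose_neg_one (n : ℕ) : choose (-1 : R) n = (-1) ^ n := by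
  rw [choose_neg, add_sub_cancel_left, choose_natCast, Nat.choose_self, Nat.cast_one,
    Units.smul_def, zsmul_eq_mul, Int.cast_negOnePow_natCast, mul_one]

theorem choose_natCast_add_one_self (n : ℕ) : choose ((n : R) + 1) n = n + 1 := by
  rw [← Nat.cast_add_one, choose_natCast, Nat.choose_succ_self_right, Nat.cast_add_one]

theorem mul_choose_eq_choose_pred_mul (r : R) {n : ℕ} (hn : 1 ≤ n) :
    n * choose r n = choose r (n - 1) * (r - (n - 1)) := by
  have h := choose_smul_choose r (Nat.sub_le n 1)
  rwa [Nat.choose_symm hn, Nat.choose_one_right, nsmul_eq_mul, Nat.sub_sub_self hn,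
    choose_one_right, Nat.cast_sub hn, Nat.cast_one] at h

theorem eq_neg_one_or_eq_add_one_of_choose_eq_mul_choose [IsDomain R] {σ β : R}
    (hσ : σ * σ = 1) (hβ : β ≠ 0) {d : ℕ} (hd : 2 ≤ d)
    (h₁ : choose β 1 = σ * choose β d) (h₂ : choose β 2 = σ * choose β (d - 1)) :
    β = -1 ∨ β = d + 1 := by
  have r₂ : (2 : R) * choose β 2 = β * (β - 1) := by
    have h := mul_choose_eq_choose_pred_mul β (n := 2) le_add_self
    norm_num [choose_one_right] at h
    exact h
  have r_d := mul_choose_eq_choose_pred_mul β (by omega : 1 ≤ d)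
  rw [choose_one_right] at h₁
  have key : β * ((β + 1) * (β - (d + 1))) = 0 := by
    linear_combination (-(β - d + 1)) * r₂ + 2 * (β - d + 1) * h₂ - 2 * σ * r_d
      - 2 * σ ^ 2 * d * h₁ + (2 * d * β - 2 * σ * d * choose β d) * hσ
  rcases mul_eq_zero.mp ((mul_eq_zero.mp key).resolve_left hβ) with h | h
  · exact .inl (eq_neg_of_add_eq_zero_left h)
  · exact .inr (sub_eq_zero.mp h)

end Ring

theorem genBinom_eq_choose {K : Type*} [Field K] [CharZero K] (β : K) (n : ℕ) :
    genBinom β n = Ring.choose β n := by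
  have h := Ring.descPochhammer_eq_factorial_smul_choose β n
  rw [← Polynomial.aeval_eq_smeval, Polynomial.aeval_def, ← Polynomial.eval_map,
    descPochhammer_map, descPochhammer_eval_eq_prod_range] at h
  rw [genBinom, h, ← Nat.cast_smul_eq_nsmul ℚ, inv_smul_smul₀]
  exact_mod_cast n.factorial_ne_zero

theorem genBinom_mul_neg_one_pow_eq_iff {K : Type*} [Field K] [CharZero K] (β : K) (ε : ℕ)
    {d k : ℕ} (hk : k < d) :
    genBinom β (k + 1) * (-1) ^ (k + 1) = (-1) ^ ε * genBinom β (d - k) * (-1) ^ (d - k) ↔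
      Ring.choose β (k + 1) = (-1) ^ (ε + d + 1) * Ring.choose β (d - k) := by
  rw [genBinom_eq_choose, genBinom_eq_choose, mul_neg_one_pow_eq_mul_neg_one_pow_iff,
    ← mul_assoc, ← pow_add, show k + 1 + (d - k) + ε = ε + d + 1 by omega]

/-- For `d ≥ 2`, `ε ∈ {0,1}`, `β ≠ 0`: the system
`binom(β,k+1)·(-1)^{k+1} = (-1)^ε·binom(β,d-k)·(-1)^{d-k}` for `k = 0,…,d-1` holds iff
either `ε = 0` and `β = -1`, or `ε ≡ d+1 (mod 2)` and `β = d+1`. -/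
theorem stmt12 (d : ℕ) (hd : 2 ≤ d) (ε : ℕ) (hε : ε = 0 ∨ ε = 1) (β : ℂ) (hβ : β ≠ 0) :
    (∀ k : ℕ, k < d →
        genBinom β (k + 1) * (-1 : ℂ) ^ (k + 1)
          = (-1 : ℂ) ^ ε * genBinom β (d - k) * (-1 : ℂ) ^ (d - k))
      ↔ ((ε = 0 ∧ β = -1) ∨ (ε % 2 = (d + 1) % 2 ∧ β = (d : ℂ) + 1)) := by
  rw [forall₂_congr fun k (hk : k < d) =>
    genBinom_mul_neg_one_pow_eq_iff β ε hk]
  constructor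
  · intro h
    have h₀ := h 0 (by omega)
    rw [zero_add, Nat.sub_zero] at h₀
    have hσ : ((-1 : ℂ) ^ (ε + d + 1)) * (-1) ^ (ε + d + 1) = 1 := by rw [← mul_pow]; simp
    rcases Ring.eq_neg_one_or_eq_add_one_of_choose_eq_mul_choose hσ hβ hd h₀ (h 1 (by omega))
      with rfl | rfl
    · rw [Ring.choose_one_right, Ring.choose_neg_one, ← pow_add, eq_comm,
        neg_one_pow_eq_neg_one_iff_odd (by norm_num), Nat.odd_iff] at h₀
      exact .inl ⟨by omega, rfl⟩
    · rw [Ring.choose_one_right, Ring.choose_natCast_add_one_self, eq_comm,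
        mul_eq_right₀ (by exact_mod_cast d.succ_ne_zero),
        neg_one_pow_eq_one_iff_even (by norm_num), Nat.even_iff] at h₀
      exact .inr ⟨by omega, rfl⟩
  · rintro (⟨rfl, rfl⟩ | ⟨hpar, rfl⟩) k hk
    · rw [Ring.choose_neg_one, Ring.choose_neg_one, ← pow_add, neg_one_pow_eq_pow_mod_two,
        neg_one_pow_eq_pow_mod_two (0 + d + 1 + (d - k))]
      congr 1
      omega
    · rw [(Nat.even_iff.mpr (by omega) : Even (ε + d + 1)).neg_one_pow, one_mul,
        ← Nat.cast_add_one, Ring.choose_natCast, Ring.choose_natCast, Nat.choose_symm_of_eq_add]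
      omega
end
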